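/- arXiv:2106.05483 — 8 statements merged into one kernel-verified Lean document; each statement's English description precedes it below -/
import Mathlib

section
/- Let p and q be distinct odd primes and let d be a positive integer dividing 3(4^{pq}-1)/((4^p-1)(4^q-1)). If a prime d0 > 3 divides d and 4^p ≡ 1 (mod d0), then d0 = q. -/
theorem prime_divisor_eq_q (p q d d0 : ℕ) (hp : p.Prime) (hq : q.Prime)
    (hop : Odd p) (hoq : Odd q) (hne : p ≠ q) (hd : 0 < d)
    (hdvd : d * ((4 ^ p - 1) * (4 ^ q - 1)) ∣ 3 * (4 ^ (p * q) - 1))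
    (hd0 : d0.Prime) (hd0gt : 3 < d0) (hd0d : d0 ∣ d)
    (hcong : 4 ^ p ≡ 1 [MOD d0]) : d0 = q := by
  haveI : Fact d0.Prime := ⟨hd0⟩
  have hod0 : Odd d0 := hd0.odd_of_ne_two (by omega)
  -- d0 ∣ 4^p - 1
  have h4p1 : 1 ≤ 4 ^ p := Nat.one_le_pow _ _ (by norm_num)
  have hxy : d0 ∣ 4 ^ p - 1 := (Nat.modEq_iff_dvd' h4p1).mp hcong.symm
  have hx : ¬ d0 ∣ 4 ^ p := by
    intro h
    have h4 := hd0.dvd_of_dvd_pow (n := p) (m := 4) h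
    have := Nat.le_of_dvd (by norm_num) h4
    have : d0 = 4 := by omega
    subst this; norm_num at hd0
  -- LTE
  have hlt : (1 : ℕ) < 4 ^ p := Nat.one_lt_pow hp.ne_zero (by norm_num)
  have hLTE := padicValNat.pow_sub_pow (p := d0) (x := 4 ^ p) (y := 1)
      hod0 hlt (by simpa using hxy) hx hq.ne_zero
  rw [one_pow, ← pow_mul] at hLTE
  -- d0^(v+1) divides 4^(p*q) - 1
  set v := padicValNat d0 (4 ^ p - 1) with hv
  have hdvd2 : d0 ^ (v + 1) ∣ 3 * (4 ^ (p * q) - 1) := by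
    calc d0 ^ (v + 1) = d0 * d0 ^ v := by ring
    _ ∣ d * ((4 ^ p - 1) * (4 ^ q - 1)) := by
        exact mul_dvd_mul hd0d (dvd_mul_of_dvd_left pow_padicValNat_dvd _)
    _ ∣ 3 * (4 ^ (p * q) - 1) := hdvd
  have hcop : ¬ d0 ∣ 3 := fun h => by
    have := Nat.le_of_dvd (by norm_num) h; omega
  have hdvd3 : d0 ^ (v + 1) ∣ 4 ^ (p * q) - 1 :=
    (Nat.Coprime.dvd_of_dvd_mul_left
      (Nat.Coprime.pow_left _ ((Nat.coprime_primes hd0 (by norm_num)).mpr (by omega))) hdvd2)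
  have hM0 : 4 ^ (p * q) - 1 ≠ 0 := by
    have : (1 : ℕ) < 4 ^ (p * q) := Nat.one_lt_pow (Nat.mul_ne_zero hp.ne_zero hq.ne_zero) (by norm_num)
    omega
  have hle : v + 1 ≤ padicValNat d0 (4 ^ (p * q) - 1) :=
    (padicValNat_dvd_iff_le hM0).mp hdvd3
  rw [hLTE] at hle
  have hv1 : padicValNat d0 q ≠ 0 := by omega
  have hdq : d0 ∣ q :=
    (dvd_pow_self d0 hv1).trans pow_padicValNat_dvd
  exact (Nat.prime_dvd_prime_iff_eq hd0 hq).mp hdq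
end

section
/- Let p and q be primes with p ≡ q + 4 (mod 8) and let d0 = 1 + 4pq. Then d0 ≡ 5 (mod 8), and if d0 is prime then d0 does not divide 4^{pq} - 1. -/
theorem d0_five_mod_eight_not_dvd (p q : ℕ) (hp : p.Prime) (hq : q.Prime)
    (hcong : p ≡ q + 4 [MOD 8]) :
    1 + 4 * p * q ≡ 5 [MOD 8] ∧
      ((1 + 4 * p * q).Prime → ¬ (1 + 4 * p * q) ∣ 4 ^ (p * q) - 1) := by
  have hcong' : p % 8 = (q + 4) % 8 := hcong
  have hq2 : q ≠ 2 := by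
    rintro rfl
    have hp2 := hp.eq_two_or_odd
    omega
  have hp2 : p ≠ 2 := by
    rintro rfl
    have := hq.eq_two_or_odd
    omega
  have hqodd : q % 2 = 1 := hq.eq_two_or_odd.resolve_left hq2
  have hpodd : p % 2 = 1 := hp.eq_two_or_odd.resolve_left hp2
  have hmul : p * q % 8 = (p % 8) * (q % 8) % 8 := Nat.mul_mod p q 8
  have hq8 : q % 8 = 1 ∨ q % 8 = 3 ∨ q % 8 = 5 ∨ q % 8 = 7 := by omega
  have hmod : (1 + 4 * p * q) % 8 = 5 := by
    have h1 : (1 + 4 * p * q) % 8 = (1 + 4 * (p * q % 8)) % 8 := by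
      conv_lhs => rw [Nat.add_mod, mul_assoc, Nat.mul_mod 4 (p * q) 8]
      rw [Nat.add_mod]
      simp [Nat.mul_mod]
    rcases hq8 with h | h | h | h <;>
      · have hp8 : p % 8 = (q % 8 + 4) % 8 := by omega
        rw [h] at hp8
        norm_num at hp8
        rw [h, hp8] at hmul
        norm_num at hmul
        omega
  constructor
  · show (1 + 4 * p * q) % 8 = 5 % 8
    omega
  · intro hprime hdvd
    set n := 1 + 4 * p * q with hn
    have hp1 : 1 ≤ p := hp.one_lt.le.trans' (by norm_num)
    have hq1 : 1 ≤ q := hq.one_lt.le.trans' (by norm_num)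
    have hn' : n = 1 + 4 * (p * q) := by rw [hn, mul_assoc]
    have hpq1 : 1 ≤ p * q := Nat.one_le_iff_ne_zero.mpr (by positivity)
    have hn5 : 5 ≤ n := by omega
    haveI : Fact n.Prime := ⟨hprime⟩
    haveI : NeZero n := ⟨by omega⟩
    have hne2 : n ≠ 2 := by omega
    have hnsq : ¬ IsSquare (2 : ZMod n) := by
      rw [ZMod.exists_sq_eq_two_iff hne2]
      push_neg
      omega
    have h2ne : (2 : ZMod n) ≠ 0 := by
      intro h
      have h' : ((2 : ℕ) : ZMod n) = 0 := by exact_mod_cast h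
      rw [ZMod.natCast_eq_zero_iff] at h'
      have := Nat.le_of_dvd (by norm_num) h'
      omega
    have hpow : (2 : ZMod n) ^ (n / 2) ≠ 1 :=
      fun h => hnsq ((ZMod.euler_criterion n h2ne).mpr h)
    have hdiv : n / 2 = 2 * (p * q) := by omega
    have hm : (1 : ℕ) ≡ 4 ^ (p * q) [MOD n] :=
      (Nat.modEq_iff_dvd' (Nat.one_le_pow _ _ (by norm_num))).mpr hdvd
    have hc : (4 : ZMod n) ^ (p * q) = 1 := by
      have h' := (ZMod.natCast_eq_natCast_iff (4 ^ (p * q)) 1 n).mpr hm.symm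
      push_cast at h'
      exact h'
    apply hpow
    rw [hdiv, pow_mul]
    norm_num
    exact hc
end

section
/- There are no integers b, p, q with p, q primes satisfying gcd(p-1, q-1) = 4 such that -4(4b+3)^2 + 7pq - 399 = 0 and 1 + 6pq is prime. -/
theorem no_solution_lambda_three :
    ¬ ∃ (b : ℤ) (p q : ℕ), p.Prime ∧ q.Prime ∧ Nat.gcd (p - 1) (q - 1) = 4 ∧
      (-4 * (4 * b + 3) ^ 2 + 7 * (p : ℤ) * (q : ℤ) - 399 = 0) ∧
      (1 + 6 * p * q).Prime := by
  rintro ⟨b, p, q, hp, hq, -, heq, hpr⟩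
  -- 7 divides 4b+3
  have h7 : (7 : ℤ) ∣ (4 * b + 3) := by
    have e7 : (7 : ZMod 7) = 0 := by decide
    have e399 : (399 : ZMod 7) = 0 := by decide
    have e4 : (4 : ZMod 7) ≠ 0 := by decide
    haveI : Fact (Nat.Prime 7) := ⟨by norm_num⟩
    have h0 : ((4 * b + 3 : ℤ) : ZMod 7) = 0 := by
      have h := congrArg (fun x : ℤ => (x : ZMod 7)) heq
      push_cast at h
      have h2 : (4 : ZMod 7) * ((4 : ZMod 7) * (b : ZMod 7) + 3) ^ 2 = 0 := by
        linear_combination -h + (p : ZMod 7) * (q : ZMod 7) * e7 - e399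
      rcases mul_eq_zero.mp h2 with h | h
      · exact absurd h e4
      · have := pow_eq_zero_iff (n := 2) two_ne_zero |>.mp h
        push_cast
        exact this
    exact_mod_cast (ZMod.intCast_zmod_eq_zero_iff_dvd _ 7).mp h0
  obtain ⟨w, hw⟩ := h7
  -- p*q = 28 w^2 + 57
  have hpq : (p : ℤ) * q = 28 * w ^ 2 + 57 := by
    rw [hw] at heq; nlinarith [heq]
  have hdvd : (7 : ℕ) ∣ 1 + 6 * p * q := by
    have : (7 : ℤ) ∣ (1 + 6 * p * q : ℤ) := ⟨24 * w ^ 2 + 49, by push_cast; nlinarith [hpq]⟩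
    exact_mod_cast this
  have hbig : 1 + 6 * p * q > 7 := by
    have := hp.two_le; have := hq.two_le; nlinarith
  have := (Nat.Prime.eq_one_or_self_of_dvd hpr 7 hdvd)
  omega
end

section
/- Let p < q be odd primes with gcd(p-1, q-1) = 4. Then gcd(q-1, 4^p-1) ≤ (q-1)/4 and (6pq+1)·(q-1)/4 < 3pq²/2. -/
theorem gcd_bound_and_ineq (p q : ℕ) (hp : p.Prime) (hq : q.Prime)
    (hop : Odd p) (hoq : Odd q) (hlt : p < q)
    (hgcd : Nat.gcd (p - 1) (q - 1) = 4) :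
    Nat.gcd (q - 1) (4 ^ p - 1) ≤ (q - 1) / 4 ∧
      ((6 * p * q + 1 : ℚ) * ((q : ℚ) - 1) / 4 < 3 * p * q ^ 2 / 2) := by
  have hq1 : 1 ≤ q := hq.one_lt.le
  have h4 : (4 : ℕ) ∣ q - 1 := hgcd ▸ Nat.gcd_dvd_right _ _
  set g := Nat.gcd (q - 1) (4 ^ p - 1) with hg
  have hgdvd : g ∣ q - 1 := Nat.gcd_dvd_left _ _
  have hgdvd2 : g ∣ 4 ^ p - 1 := Nat.gcd_dvd_right _ _
  -- 4^p - 1 is odd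
  have hpow : Odd (4 ^ p - 1) := by
    have he : Even (4 ^ p) := by
      have : (2 : ℕ) ∣ 4 ^ p := dvd_pow (by norm_num) hp.ne_zero
      exact (even_iff_two_dvd).2 this
    have h1 : 1 ≤ 4 ^ p := Nat.one_le_pow _ _ (by norm_num)
    exact Nat.Even.sub_odd h1 he odd_one
  have hgodd : Odd g := hpow.of_dvd_nat hgdvd2
  have hcop : Nat.Coprime g 4 := by
    have hnd : ¬ 2 ∣ g := by
      rw [Nat.two_dvd_ne_zero]; exact Nat.odd_iff.mp hgodd
    have : Nat.Coprime g 2 := Nat.coprime_comm.mp (Nat.prime_two.coprime_iff_not_dvd.mpr hnd)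
    simpa using (Nat.Coprime.pow_right 2 this : Nat.Coprime g (2 ^ 2))
  have hmul : g * 4 ∣ q - 1 := (Nat.Coprime.mul_dvd_of_dvd_of_dvd hcop hgdvd h4)
  have hq2 : 0 < q - 1 := by have := hq.one_lt; omega
  constructor
  · rw [Nat.le_div_iff_mul_le (by norm_num : 0 < 4)]
    exact Nat.le_of_dvd hq2 hmul
  · have hp1 : (1 : ℚ) ≤ p := by exact_mod_cast hp.one_lt.le
    have hq1' : (1 : ℚ) ≤ q := by exact_mod_cast hq1
    nlinarith [mul_pos (lt_of_lt_of_le one_pos hp1) (lt_of_lt_of_le one_pos hq1'),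
      sq_nonneg ((q : ℚ) - 1)]
end

section
/- Let p, q be distinct odd primes with gcd(p-1,q-1)=4 and let D_0 be the generalized cyclotomic class of order 4 modulo pq (the subgroup generated by the common primitive root g in (Z/pqZ)*). Then -1 ∈ D_0 if (p-1)(q-1)/16 is odd, and -1 ∈ D_2 if (p-1)(q-1)/16 is even. -/
private lemma pow_congr_of_modEq {M : Type*} [Monoid M] {a : M} {n : ℕ} (h1 : a ^ n = 1)
    {s r : ℕ} (h : s ≡ r [MOD n]) : a ^ s = a ^ r := by
  have hs : a ^ s = a ^ (s % n) := by
    conv_lhs => rw [← Nat.div_add_mod s n]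
    rw [pow_add, pow_mul, h1, one_pow, one_mul]
  have hr : a ^ r = a ^ (r % n) := by
    conv_lhs => rw [← Nat.div_add_mod r n]
    rw [pow_add, pow_mul, h1, one_pow, one_mul]
  rw [hs, hr, h]

private lemma pow_eq_neg_one {p : ℕ} [Fact p.Prime] (g : ℕ) (a : ℕ) (ha : 0 < a)
    (hord : orderOf (g : ZMod p) = 4 * a) {m : ℕ} (hm : m ≡ 2 * a [MOD 4 * a]) :
    (g : ZMod p) ^ m = -1 := by
  have hone : (g : ZMod p) ^ (4 * a) = 1 := by rw [← hord]; exact pow_orderOf_eq_one _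
  have hhalf : (g : ZMod p) ^ (2 * a) = -1 := by
    have hsq : (g : ZMod p) ^ (2 * a) * (g : ZMod p) ^ (2 * a) = 1 := by
      rw [← pow_add]
      have : 2 * a + 2 * a = 4 * a := by ring
      rw [this, hone]
    rcases mul_self_eq_one_iff.mp hsq with h1 | h1
    · exfalso
      exact pow_ne_one_of_lt_orderOf (by omega) (by omega) h1
    · exact h1
  rw [pow_congr_of_modEq hone hm, hhalf]

private lemma crt_eq_neg_one (p q g h : ℕ) (hp : p.Prime) (hq : q.Prime) (hne : p ≠ q)
    (hhp : h ≡ g [MOD p]) (hhq : h ≡ 1 [MOD q]) (s i : ℕ)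
    (hps : (g : ZMod p) ^ (s + i) = -1) (hqs : (g : ZMod q) ^ s = -1) :
    (g : ZMod (p * q)) ^ s * (h : ZMod (p * q)) ^ i = -1 := by
  have hcop : Nat.Coprime p q := (Nat.coprime_primes hp hq).mpr hne
  have hpd : p ∣ g ^ s * h ^ i + 1 := by
    rw [← ZMod.natCast_eq_zero_iff]
    push_cast
    have hgh : (h : ZMod p) = (g : ZMod p) := (ZMod.natCast_eq_natCast_iff _ _ _).mpr hhp
    rw [hgh, ← pow_add, hps]
    ring
  have hqd : q ∣ g ^ s * h ^ i + 1 := by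
    rw [← ZMod.natCast_eq_zero_iff]
    push_cast
    have hh1 : (h : ZMod q) = 1 := by
      have := (ZMod.natCast_eq_natCast_iff _ _ _).mpr hhq
      simpa using this
    rw [hh1, one_pow, mul_one, hqs]
    ring
  have hpq : p * q ∣ g ^ s * h ^ i + 1 := hcop.mul_dvd_of_dvd_of_dvd hpd hqd
  have hz : ((g ^ s * h ^ i + 1 : ℕ) : ZMod (p * q)) = 0 :=
    (ZMod.natCast_eq_zero_iff _ _).mpr hpq
  push_cast at hz
  linear_combination hz

theorem neg_one_mem_class (p q g h : ℕ) (hp : p.Prime) (hq : q.Prime)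
    (hop : Odd p) (hoq : Odd q) (hne : p ≠ q)
    (hgcd : Nat.gcd (p - 1) (q - 1) = 4)
    (hgp : orderOf (g : ZMod p) = p - 1)
    (hgq : orderOf (g : ZMod q) = q - 1)
    (hhp : h ≡ g [MOD p]) (hhq : h ≡ 1 [MOD q])
    (D : ℕ → Set (ZMod (p * q)))
    (hD : ∀ i, D i = {x : ZMod (p * q) | ∃ s < (p - 1) * (q - 1) / 4,
        x = (g : ZMod (p * q)) ^ s * (h : ZMod (p * q)) ^ i}) :
    (Odd ((p - 1) * (q - 1) / 16) → (-1 : ZMod (p * q)) ∈ D 0) ∧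
      (Even ((p - 1) * (q - 1) / 16) → (-1 : ZMod (p * q)) ∈ D 2) := by
  haveI : Fact p.Prime := ⟨hp⟩
  haveI : Fact q.Prime := ⟨hq⟩
  -- extract a, b with p - 1 = 4a, q - 1 = 4b
  have h4p : 4 ∣ p - 1 := hgcd ▸ Nat.gcd_dvd_left _ _
  have h4q : 4 ∣ q - 1 := hgcd ▸ Nat.gcd_dvd_right _ _
  obtain ⟨a, hpa⟩ := h4p
  obtain ⟨b, hqb⟩ := h4q
  have hp1 : 1 ≤ p := hp.one_lt.le
  have hq1 : 1 ≤ q := hq.one_lt.le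
  have ha : 0 < a := by
    rcases Nat.eq_zero_or_pos a with h0 | h0
    · exfalso; have := hp.two_le; omega
    · exact h0
  have hb : 0 < b := by
    rcases Nat.eq_zero_or_pos b with h0 | h0
    · exfalso; have := hq.two_le; omega
    · exact h0
  have hcopab : Nat.Coprime a b := by
    have : Nat.gcd (4 * a) (4 * b) = 4 := by rw [← hpa, ← hqb]; exact hgcd
    rw [Nat.gcd_mul_left] at this
    omega
  have hmul : (p - 1) * (q - 1) = 16 * (a * b) := by rw [hpa, hqb]; ring
  have he4 : (p - 1) * (q - 1) / 4 = 4 * (a * b) := by omega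
  have he16 : (p - 1) * (q - 1) / 16 = a * b := by omega
  have hab : 0 < a * b := Nat.mul_pos ha hb
  have hordp : orderOf (g : ZMod p) = 4 * a := by rw [hgp, hpa]
  have hordq : orderOf (g : ZMod q) = 4 * b := by rw [hgq, hqb]
  constructor
  · -- odd case, i = 0
    intro hodd
    rw [he16] at hodd
    have hao : Odd a := by
      rcases Nat.even_or_odd a with he | ho
      · exact absurd (he.mul_right b) (Nat.not_even_iff_odd.mpr hodd)
      · exact ho
    have hbo : Odd b := by
      rcases Nat.even_or_odd b with he | ho
      · exact absurd (he.mul_left a) (Nat.not_even_iff_odd.mpr hodd)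
      · exact ho
    rw [hD 0]
    refine ⟨2 * (a * b), by rw [he4]; omega, ?_⟩
    symm
    apply crt_eq_neg_one p q g h hp hq hne hhp hhq
    · apply pow_eq_neg_one g a ha hordp
      obtain ⟨c, hc⟩ := hbo
      show (2 * (a * b) + 0) % (4 * a) = (2 * a) % (4 * a)
      have : 2 * (a * b) + 0 = 2 * a + (4 * a) * c := by rw [hc]; ring
      rw [this, Nat.add_mul_mod_self_left]
    · apply pow_eq_neg_one g b hb hordq
      obtain ⟨c, hc⟩ := hao
      show (2 * (a * b)) % (4 * b) = (2 * b) % (4 * b)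
      have : 2 * (a * b) = 2 * b + (4 * b) * c := by rw [hc]; ring
      rw [this, Nat.add_mul_mod_self_left]
  · -- even case, i = 2
    intro heven
    rw [he16] at heven
    have h2ab : 2 ∣ a ∨ 2 ∣ b := (Nat.Prime.dvd_mul Nat.prime_two).mp heven.two_dvd
    have hnot : ¬(2 ∣ a ∧ 2 ∣ b) := by
      rintro ⟨h2a, h2b⟩
      have := Nat.dvd_gcd h2a h2b
      rw [hcopab] at this
      omega
    -- compatibility mod gcd(4b, 4a) = 4
    have hcompat : 2 * b ≡ 2 * a - 2 [MOD Nat.gcd (4 * b) (4 * a)] := by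
      have hg : Nat.gcd (4 * b) (4 * a) = 4 := by
        rw [← hpa, ← hqb, Nat.gcd_comm]; exact hgcd
      rw [hg]
      show (2 * b) % 4 = (2 * a - 2) % 4
      omega
    obtain ⟨k, hk1, hk2⟩ := Nat.chineseRemainder' hcompat
    -- hk1 : k ≡ 2*b [MOD 4*b], hk2 : k ≡ 2*a - 2 [MOD 4*a]
    set s := k % (4 * (a * b)) with hs
    have hlt : s < 4 * (a * b) := Nat.mod_lt _ (by positivity)
    have hsk : s ≡ k [MOD 4 * (a * b)] := Nat.mod_modEq _ _
    have hskb : s ≡ 2 * b [MOD 4 * b] :=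
      (hsk.of_dvd ⟨a, by ring⟩).trans hk1
    have hska : s ≡ 2 * a - 2 [MOD 4 * a] :=
      (hsk.of_dvd ⟨b, by ring⟩).trans hk2
    rw [hD 2]
    refine ⟨s, by rw [he4]; omega, ?_⟩
    symm
    apply crt_eq_neg_one p q g h hp hq hne hhp hhq
    · apply pow_eq_neg_one g a ha hordp
      have := hska.add_right 2
      have h2a : 2 * a - 2 + 2 = 2 * a := by omega
      rwa [h2a] at this
    · exact pow_eq_neg_one g b hb hordq hskb
end

section
/- Let p, q be distinct odd primes with gcd(p-1,q-1)=4, and let E(X) = Σ_{u=0}^{pq-1} e_u X^u where e_u = 2 if u mod pq ∈ Q∪{0}, e_u = 0 if u mod pq ∈ P, and e_u = i if u mod pq ∈ D_i, with P = {p, 2p, ..., (q-1)p} and Q = {q, 2q, ..., (p-1)q}. Then E(4) ≡ 2p (mod 3); in particular 3 does not divide E(4). -/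
/-! Since `4 ≡ 1 (mod 3)`, `E(4) ≡ E(1) (mod 3)`. In `E(1)` the `p` multiples of `q` contribute
`2p` and the other multiples of `p` nothing. Reducing modulo `p` and modulo `q`, the map
`(s, i) ↦ g^s h^i` is injective on `[0, lcm(p-1, q-1)) × [0, gcd(p-1, q-1))`, so by counting
it is a bijection onto the `φ(pq) = (p-1)(q-1)` reduced residues. Hence the units contribute
`lcm(p-1, q-1) · (0 + 1 + 2 + 3)`, a multiple of `3`. -/

open Finset

theorem Nat.eq_and_eq_of_modEq_of_add_modEq {m n s t i j : ℕ} (hst : s ≡ t [MOD n])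
    (hsi : s + i ≡ t + j [MOD m]) (hs : s < lcm m n) (ht : t < lcm m n)
    (hi : i < gcd m n) (hj : j < gcd m n) : s = t ∧ i = j := by
  have hij : i = j :=
    ((hst.of_dvd (gcd_dvd_right m n)).add_left_cancel
      (hsi.of_dvd (gcd_dvd_left m n))).eq_of_lt_of_lt hi hj
  subst hij
  exact ⟨(Nat.mod_lcm (hsi.add_right_cancel' i) hst).eq_of_lt_of_lt hs ht, rfl⟩

theorem card_filter_dvd_range_mul (p : ℕ) {q : ℕ} (hq : 0 < q) :
    #{u ∈ range (p * q) | q ∣ u} = p := by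
  have : {u ∈ range (p * q) | q ∣ u} =
      (range p).map ⟨(· * q), mul_left_injective₀ hq.ne'⟩ := by
    ext u
    simp only [mem_filter, mem_range, mem_map, Function.Embedding.coeFn_mk]
    constructor
    · rintro ⟨hu, k, rfl⟩
      exact ⟨k, by nlinarith, mul_comm k q⟩
    · rintro ⟨k, hk, rfl⟩
      exact ⟨Nat.mul_lt_mul_of_pos_right hk hq, dvd_mul_left q k⟩
  rw [this, card_map, card_range]

theorem sum_range_mul_eq_of_prime {M : Type*} [AddCommMonoid M] {p q : ℕ} (hp : p.Prime)
    (hq : q.Prime) (f : ℕ → M) :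
    ∑ u ∈ range (p * q), f u = ∑ u ∈ range (p * q) with q ∣ u, f u +
      ∑ u ∈ range (p * q) with p ∣ u ∧ ¬ q ∣ u, f u +
      ∑ u ∈ range (p * q) with (p * q).Coprime u, f u := by
  have hcop : ∀ u, (p * q).Coprime u ↔ ¬ q ∣ u ∧ ¬ p ∣ u := fun u => by
    rw [Nat.coprime_comm, Nat.coprime_mul_iff_right, hp.coprime_iff_not_dvd.symm.trans
      Nat.coprime_comm, hq.coprime_iff_not_dvd.symm.trans Nat.coprime_comm, and_comm]
  rw [← sum_filter_add_sum_filter_not (range (p * q)) (q ∣ ·),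
    ← sum_filter_add_sum_filter_not {u ∈ range (p * q) | ¬ q ∣ u} (p ∣ ·),
    filter_filter, filter_filter, add_assoc]
  simp only [hcop, and_comm]

theorem sum_filter_coprime_eq_sum_of_injOn {α M : Type*} [AddCommMonoid M] {N : ℕ} [NeZero N]
    (f : ℕ → M) (T : Finset α) (Φ : α → ZMod N) (hunit : ∀ x ∈ T, IsUnit (Φ x))
    (hinj : Set.InjOn Φ T) (hcard : N.totient ≤ #T) :
    ∑ u ∈ range N with N.Coprime u, f u = ∑ x ∈ T, f (Φ x).val := by
  have hinj' : Set.InjOn (fun x => (Φ x).val) T := (ZMod.val_injective N).comp_injOn hinj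
  have himage : T.image (fun x => (Φ x).val) = {u ∈ range N | N.Coprime u} := by
    refine eq_of_subset_of_card_le (fun u hu => ?_) ?_
    · obtain ⟨x, hx, rfl⟩ := mem_image.mp hu
      obtain ⟨v, hv⟩ := hunit x hx
      exact mem_filter.mpr
        ⟨mem_range.mpr (ZMod.val_lt _), hv ▸ (ZMod.val_coe_unit_coprime v).symm⟩
    · rwa [card_image_of_injOn hinj', ← Nat.totient_eq_card_coprime]
  rw [← himage, sum_image hinj']

theorem isOfFinOrder_of_orderOf_eq_sub_one {M : Type*} [Monoid M] {x : M} {r : ℕ} (hr : 2 ≤ r)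
    (hx : orderOf x = r - 1) : IsOfFinOrder x :=
  orderOf_pos_iff.mp (by omega)

theorem ZMod.isUnit_natCast_mul {a p q : ℕ} (hp : IsUnit (a : ZMod p))
    (hq : IsUnit (a : ZMod q)) : IsUnit (a : ZMod (p * q)) := by
  rw [ZMod.isUnit_iff_coprime] at hp hq ⊢
  exact hp.mul_right hq

theorem natCast_pow_mul_pow_injOn {p q g h : ℕ} (hp : p.Prime) (hq : q.Prime)
    (hgp : orderOf (g : ZMod p) = p - 1) (hgq : orderOf (g : ZMod q) = q - 1)
    (hhp : h ≡ g [MOD p]) (hhq : h ≡ 1 [MOD q]) :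
    Set.InjOn (fun si : ℕ × ℕ => (g : ZMod (p * q)) ^ si.1 * (h : ZMod (p * q)) ^ si.2)
      ↑(range (Nat.lcm (p - 1) (q - 1)) ×ˢ range (Nat.gcd (p - 1) (q - 1))) := by
  rintro ⟨s, i⟩ hsi ⟨t, j⟩ htj hx
  simp only [coe_product, coe_range, Set.mem_prod, Set.mem_Iio] at hsi htj
  have hxp := congrArg (ZMod.castHom (dvd_mul_right p q) (ZMod p)) hx
  have hxq := congrArg (ZMod.castHom (dvd_mul_left q p) (ZMod q)) hx
  simp only [map_mul, map_pow, map_natCast] at hxp hxq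
  rw [(ZMod.natCast_eq_natCast_iff _ _ _).mpr hhp, ← pow_add, ← pow_add,
    (isOfFinOrder_of_orderOf_eq_sub_one hp.two_le hgp).pow_eq_pow_iff_modEq, hgp] at hxp
  rw [(ZMod.natCast_eq_natCast_iff _ _ _).mpr hhq, Nat.cast_one, one_pow, one_pow, mul_one,
    mul_one, (isOfFinOrder_of_orderOf_eq_sub_one hq.two_le hgq).pow_eq_pow_iff_modEq, hgq] at hxq
  obtain ⟨rfl, rfl⟩ := Nat.eq_and_eq_of_modEq_of_add_modEq hxq hxp hsi.1 htj.1 hsi.2 htj.2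
  rfl

theorem sum_filter_coprime_eq_lcm_mul {p q g h : ℕ} (hp : p.Prime) (hq : q.Prime) (hne : p ≠ q)
    (hgp : orderOf (g : ZMod p) = p - 1) (hgq : orderOf (g : ZMod q) = q - 1)
    (hhp : h ≡ g [MOD p]) (hhq : h ≡ 1 [MOD q]) (e : ℕ → ℕ)
    (he : ∀ s < Nat.lcm (p - 1) (q - 1), ∀ i < Nat.gcd (p - 1) (q - 1),
      e ((g : ZMod (p * q)) ^ s * (h : ZMod (p * q)) ^ i).val = i) :
    ∑ u ∈ range (p * q) with (p * q).Coprime u, e u =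
      Nat.lcm (p - 1) (q - 1) * ∑ i ∈ range (Nat.gcd (p - 1) (q - 1)), i := by
  have : NeZero (p * q) := ⟨(Nat.mul_pos hp.pos hq.pos).ne'⟩
  have hgp' := (isOfFinOrder_of_orderOf_eq_sub_one hp.two_le hgp).isUnit
  have hgq' := (isOfFinOrder_of_orderOf_eq_sub_one hq.two_le hgq).isUnit
  have hg : IsUnit (g : ZMod (p * q)) := ZMod.isUnit_natCast_mul hgp' hgq'
  have hh : IsUnit (h : ZMod (p * q)) := by
    refine ZMod.isUnit_natCast_mul ?_ ?_
    · rwa [(ZMod.natCast_eq_natCast_iff _ _ _).mpr hhp]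
    · rw [(ZMod.natCast_eq_natCast_iff _ _ _).mpr hhq, Nat.cast_one]; exact isUnit_one
  have hcard : (p * q).totient ≤
      #(range (Nat.lcm (p - 1) (q - 1)) ×ˢ range (Nat.gcd (p - 1) (q - 1))) := by
    rw [Nat.totient_mul ((Nat.coprime_primes hp hq).mpr hne), Nat.totient_prime hp,
      Nat.totient_prime hq, card_product, card_range, card_range, mul_comm (Nat.lcm _ _),
      Nat.gcd_mul_lcm]
  rw [sum_filter_coprime_eq_sum_of_injOn e _ _ (fun si _ => (hg.pow si.1).mul (hh.pow si.2))
    (natCast_pow_mul_pow_injOn hp hq hgp hgq hhp hhq) hcard, sum_product,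
    sum_const_nat fun s hs => sum_congr rfl fun i hi => he s (mem_range.mp hs) i (mem_range.mp hi),
    card_range]

theorem sum_mul_four_pow_modEq_three (s : Finset ℕ) (f : ℕ → ℕ) :
    ∑ u ∈ s, f u * 4 ^ u ≡ ∑ u ∈ s, f u [MOD 3] :=
  Nat.ModEq.sum fun u _ => by
    simpa using (Nat.ModEq.pow u (show 4 ≡ 1 [MOD 3] from rfl)).mul_left (f u)

theorem E_four_mod_three_general (p q g h : ℕ) (hp : p.Prime) (hq : q.Prime)
    (hne : p ≠ q)
    (hgcd : Nat.gcd (p - 1) (q - 1) = 4)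
    (hgp : orderOf (g : ZMod p) = p - 1)
    (hgq : orderOf (g : ZMod q) = q - 1)
    (hhp : h ≡ g [MOD p]) (hhq : h ≡ 1 [MOD q])
    (D : ℕ → Set (ZMod (p * q)))
    (hD : ∀ i, D i = {x : ZMod (p * q) | ∃ s < (p - 1) * (q - 1) / 4,
        x = (g : ZMod (p * q)) ^ s * (h : ZMod (p * q)) ^ i})
    (e : ℕ → ℕ)
    (he2 : ∀ u < p * q, q ∣ u → e u = 2)
    (he0 : ∀ u < p * q, p ∣ u → ¬ q ∣ u → e u = 0)
    (heD : ∀ u < p * q, ∀ i < 4, (u : ZMod (p * q)) ∈ D i → e u = i) :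
    (∑ u ∈ Finset.range (p * q), e u * 4 ^ u) ≡ 2 * p [MOD 3] ∧
      ¬ 3 ∣ ∑ u ∈ Finset.range (p * q), e u * 4 ^ u := by
  have : NeZero (p * q) := ⟨(Nat.mul_pos hp.pos hq.pos).ne'⟩
  have h4p : 4 ∣ p - 1 := hgcd ▸ Nat.gcd_dvd_left _ _
  have hd : (p - 1) * (q - 1) / 4 = Nat.lcm (p - 1) (q - 1) := by
    rw [← Nat.gcd_mul_lcm, hgcd, Nat.mul_div_cancel_left _ four_pos]
  have hunits := sum_filter_coprime_eq_lcm_mul hp hq hne hgp hgq hhp hhq e fun s hs i hi =>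
    heD _ (ZMod.val_lt _) i (hgcd ▸ hi)
      (by rw [hD, ZMod.natCast_zmod_val]; exact ⟨s, hd ▸ hs, rfl⟩)
  have htotal : ∑ u ∈ range (p * q), e u = 2 * p + Nat.lcm (p - 1) (q - 1) * 6 := by
    rw [sum_range_mul_eq_of_prime hp hq, hunits, hgcd,
      sum_congr rfl fun u hu => he2 u (mem_range.mp (mem_filter.mp hu).1) (mem_filter.mp hu).2,
      sum_eq_zero fun u hu => he0 u (mem_range.mp (mem_filter.mp hu).1) (mem_filter.mp hu).2.1
        (mem_filter.mp hu).2.2,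
      sum_const, card_filter_dvd_range_mul p hq.pos, smul_eq_mul]
    simp [sum_range_succ, mul_comm]
  have hmod : ∑ u ∈ range (p * q), e u * 4 ^ u ≡ 2 * p [MOD 3] :=
    (sum_mul_four_pow_modEq_three _ e).trans (by rw [htotal]; unfold Nat.ModEq; omega)
  refine ⟨hmod, fun h3 => ?_⟩
  have h3p : 3 ∣ p := by unfold Nat.ModEq at hmod; omega
  have := (Nat.prime_dvd_prime_iff_eq Nat.prime_three hp).mp h3p
  omega

theorem E_four_mod_three (p q g h : ℕ) (hp : p.Prime) (hq : q.Prime)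
    (hop : Odd p) (hoq : Odd q) (hne : p ≠ q)
    (hgcd : Nat.gcd (p - 1) (q - 1) = 4)
    (hgp : orderOf (g : ZMod p) = p - 1)
    (hgq : orderOf (g : ZMod q) = q - 1)
    (hhp : h ≡ g [MOD p]) (hhq : h ≡ 1 [MOD q])
    (D : ℕ → Set (ZMod (p * q)))
    (hD : ∀ i, D i = {x : ZMod (p * q) | ∃ s < (p - 1) * (q - 1) / 4,
        x = (g : ZMod (p * q)) ^ s * (h : ZMod (p * q)) ^ i})
    (e : ℕ → ℕ)
    (he2 : ∀ u < p * q, q ∣ u → e u = 2)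
    (he0 : ∀ u < p * q, p ∣ u → ¬ q ∣ u → e u = 0)
    (heD : ∀ u < p * q, ∀ i < 4, (u : ZMod (p * q)) ∈ D i → e u = i) :
    (∑ u ∈ Finset.range (p * q), e u * 4 ^ u) ≡ 2 * p [MOD 3] ∧
      ¬ 3 ∣ ∑ u ∈ Finset.range (p * q), e u * 4 ^ u :=
  E_four_mod_three_general p q g h hp hq hne hgcd hgp hgq hhp hhq D hD e he2 he0 heD
end

section
/- Let p, q be distinct odd primes with gcd(p-1,q-1)=4 and E(X) the generating polynomial of the two-prime quaternary sequence of period pq. Then E(4) ≡ (p+3)/2 (mod 4^q - 1), and consequently gcd(E(4), (4^q-1)/3) = gcd(4^q - 1, p + 3). -/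
/-!
Modulo `4 ^ q - 1` the weight `4 ^ u` depends only on `u mod q`. The multiples of `q` carry
`e = 2` and weight `1`, contributing `2p`; the other non-units carry `e = 0`. The classes
`D_0, …, D_3` are disjoint, have `(p - 1)(q - 1)/4` elements each, hence exhaust the units
mod `pq`; since `h ≡ 1 (mod q)` and `g` is a primitive root mod `q`, each `D_i` reduces mod `q`
onto `{1, …, q - 1}` exactly `(p - 1)/4` times. With `T = ∑_{j=1}^{q-1} 4^j` and
`3T = 4^q - 4 ≡ -3` this gives `E(4) ≡ 2p + 6 · (p - 1)/4 · T ≡ (p + 3)/2`.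
For the gcd, `3 ∤ (p + 3)/2` and `4 ^ q - 1` is odd.
-/

open Finset Function

theorem Function.Periodic.sum_range_mul {M : Type*} [AddCommMonoid M] {f : ℕ → M} {n : ℕ}
    (hf : Periodic f n) (K : ℕ) : ∑ s ∈ range (K * n), f s = K • ∑ s ∈ range n, f s := by
  induction K with
  | zero => simp
  | succ K ih =>
    rw [add_mul, one_mul, sum_range_add, ih, succ_nsmul]
    congr 1
    exact sum_congr rfl fun s _ => by rw [add_comm]; exact hf.nat_mul K s

theorem Function.Periodic.sum_filter_dvd_range_mul {M : Type*} [AddCommMonoid M] {f : ℕ → M}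
    {q : ℕ} (hf : Periodic f q) (hq : 0 < q) (p : ℕ) :
    ∑ u ∈ (range (p * q)).filter (q ∣ ·), f u = p • f 0 := by
  have himage : (range (p * q)).filter (q ∣ ·) = (range p).image (· * q) := by
    ext u
    simp only [mem_filter, mem_range, mem_image]
    constructor
    · rintro ⟨hu, j, rfl⟩
      exact ⟨j, by rw [mul_comm q] at hu; exact Nat.lt_of_mul_lt_mul_right hu, mul_comm j q⟩
    · rintro ⟨j, hj, rfl⟩
      exact ⟨Nat.mul_lt_mul_of_pos_right hj hq, dvd_mul_left q j⟩
  rw [himage, sum_image fun x _ y _ hxy => Nat.eq_of_mul_eq_mul_right hq hxy]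
  have hmul : ∀ j : ℕ, f (j * q) = f 0 := fun j => by simpa using hf.nat_mul_eq j
  rw [sum_congr rfl fun j _ => hmul j, sum_const, card_range]

section PrimitiveRoot

variable {r g : ℕ}

theorem isOfFinOrder_of_orderOf_eq_sub_one_s17 (hr : 1 < r) (hg : orderOf (g : ZMod r) = r - 1) :
    IsOfFinOrder (g : ZMod r) :=
  orderOf_pos_iff.mp (by rw [hg]; omega)

theorem pow_modEq_pow_iff_of_orderOf (hr : 1 < r) (hg : orderOf (g : ZMod r) = r - 1)
    {a b : ℕ} : g ^ a ≡ g ^ b [MOD r] ↔ a ≡ b [MOD r - 1] := by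
  rw [← ZMod.natCast_eq_natCast_iff, Nat.cast_pow, Nat.cast_pow, ← hg,
    (isOfFinOrder_of_orderOf_eq_sub_one_s17 hr hg).pow_eq_pow_iff_modEq]

theorem not_dvd_pow_of_orderOf (hr : 1 < r) (hg : orderOf (g : ZMod r) = r - 1) (a : ℕ) :
    ¬ r ∣ g ^ a := by
  have := Fact.mk hr
  rw [← ZMod.natCast_eq_zero_iff, Nat.cast_pow]
  exact ((isOfFinOrder_of_orderOf_eq_sub_one_s17 hr hg).isUnit.pow a).ne_zero

theorem injOn_pow_mod_range (hr : 1 < r) (hg : orderOf (g : ZMod r) = r - 1) :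
    Set.InjOn (fun s => g ^ s % r) (range (r - 1)) := fun _ hs _ ht hst =>
  ((pow_modEq_pow_iff_of_orderOf hr hg).mp hst).eq_of_lt_of_lt (mem_range.mp hs) (mem_range.mp ht)

theorem image_pow_mod_range (hr : 1 < r) (hg : orderOf (g : ZMod r) = r - 1) :
    (range (r - 1)).image (fun s => g ^ s % r) = Ico 1 r := by
  refine eq_of_subset_of_card_le (fun j hj => ?_) ?_
  · obtain ⟨s, -, rfl⟩ := mem_image.mp hj
    have := not_dvd_pow_of_orderOf hr hg s
    exact mem_Ico.mpr ⟨Nat.pos_of_ne_zero (mt Nat.dvd_of_mod_eq_zero this),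
      Nat.mod_lt _ (by omega)⟩
  · rw [card_image_of_injOn (injOn_pow_mod_range hr hg), card_range, Nat.card_Ico]

theorem sum_range_pow_mod {M : Type*} [AddCommMonoid M] (hr : 1 < r)
    (hg : orderOf (g : ZMod r) = r - 1) (f : ℕ → M) :
    ∑ s ∈ range (r - 1), f (g ^ s % r) = ∑ j ∈ Ico 1 r, f j := by
  rw [← image_pow_mod_range hr hg, sum_image (injOn_pow_mod_range hr hg)]

end PrimitiveRoot

theorem gcd_div_three_eq_of_modEq {E c M : ℕ} (hE : E ≡ c [MOD M]) (h3M : 3 ∣ M) (hM : Odd M)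
    (h3c : ¬ 3 ∣ c) : Nat.gcd E (M / 3) = Nat.gcd M (2 * c) :=
  calc Nat.gcd E (M / 3) = Nat.gcd c (M / 3) := (hE.of_dvd (Nat.div_dvd_of_dvd h3M)).gcd_eq
    _ = Nat.gcd c (3 * (M / 3)) :=
      ((Nat.prime_three.coprime_iff_not_dvd.mpr h3c).gcd_mul_left_cancel_right _).symm
    _ = Nat.gcd M (2 * c) := by
      rw [Nat.mul_div_cancel' h3M, Nat.gcd_comm,
        (Nat.coprime_two_left.mpr hM).gcd_mul_left_cancel_right]

theorem Nat.ModEq.eq_of_lt_lcm {a b m n : ℕ} (hm : a ≡ b [MOD m]) (hn : a ≡ b [MOD n])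
    (ha : a < Nat.lcm m n) (hb : b < Nat.lcm m n) : a = b := by
  wlog hab : a ≤ b generalizing a b
  · exact (this hm.symm hn.symm hb ha (le_of_not_ge hab)).symm
  have hdvd := Nat.lcm_dvd ((Nat.modEq_iff_dvd' hab).mp hm) ((Nat.modEq_iff_dvd' hab).mp hn)
  have := Nat.eq_zero_of_dvd_of_lt hdvd (by omega)
  omega

/-- Whiteman's generalized cyclotomy of order 4 modulo `p * q`. -/
structure WhitemanData (p q g h : ℕ) : Prop where
  prime_left : p.Prime
  prime_right : q.Prime
  ne : p ≠ q
  gcd_eq : Nat.gcd (p - 1) (q - 1) = 4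
  orderOf_left : orderOf (g : ZMod p) = p - 1
  orderOf_right : orderOf (g : ZMod q) = q - 1
  modEq_left : h ≡ g [MOD p]
  modEq_right : h ≡ 1 [MOD q]

/-- Whiteman's class `D_i = {g ^ s * h ^ i}` of order 4, as a set of least residues mod `p * q`. -/
def cyclotomicClass (p q g h i : ℕ) : Finset ℕ :=
  (range ((p - 1) * (q - 1) / 4)).image fun s => g ^ s * h ^ i % (p * q)

theorem mem_cyclotomicClass_iff {p q g h i u : ℕ} (hpq : 0 < p * q) :
    u ∈ cyclotomicClass p q g h i ↔ u < p * q ∧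
      ∃ s < (p - 1) * (q - 1) / 4, (u : ZMod (p * q)) = g ^ s * h ^ i := by
  simp only [cyclotomicClass, mem_image, mem_range]
  constructor
  · rintro ⟨s, hs, rfl⟩
    exact ⟨Nat.mod_lt _ hpq, s, hs, by rw [ZMod.natCast_mod]; push_cast; rfl⟩
  · rintro ⟨hu, s, hs, hsu⟩
    refine ⟨s, hs, ?_⟩
    rw [← Nat.cast_pow, ← Nat.cast_pow, ← Nat.cast_mul, ZMod.natCast_eq_natCast_iff'] at hsu
    rw [← hsu, Nat.mod_eq_of_lt hu]

namespace WhitemanData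

variable {p q g h : ℕ}

theorem coprime (W : WhitemanData p q g h) : p.Coprime q :=
  (Nat.coprime_primes W.prime_left W.prime_right).mpr W.ne

theorem four_dvd_left (W : WhitemanData p q g h) : 4 ∣ p - 1 :=
  W.gcd_eq ▸ Nat.gcd_dvd_left _ _

theorem four_dvd_right (W : WhitemanData p q g h) : 4 ∣ q - 1 :=
  W.gcd_eq ▸ Nat.gcd_dvd_right _ _

theorem lcm_eq (W : WhitemanData p q g h) : Nat.lcm (p - 1) (q - 1) = (p - 1) * (q - 1) / 4 := by
  rw [Nat.lcm, W.gcd_eq]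

theorem pow_mul_pow_modEq_pow_add (W : WhitemanData p q g h) (s i : ℕ) :
    g ^ s * h ^ i ≡ g ^ (s + i) [MOD p] := by
  rw [pow_add]
  exact Nat.ModEq.rfl.mul (W.modEq_left.pow i)

theorem pow_mul_pow_modEq_pow (W : WhitemanData p q g h) (s i : ℕ) :
    g ^ s * h ^ i ≡ g ^ s [MOD q] := by
  simpa using Nat.ModEq.rfl.mul (W.modEq_right.pow i)

theorem pow_mul_pow_modEq_iff (W : WhitemanData p q g h) {s t i j : ℕ} :
    g ^ s * h ^ i ≡ g ^ t * h ^ j [MOD p * q] ↔ s + i ≡ t + j [MOD p - 1] ∧ s ≡ t [MOD q - 1] := by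
  rw [← Nat.modEq_and_modEq_iff_modEq_mul W.coprime,
    ← pow_modEq_pow_iff_of_orderOf W.prime_left.one_lt W.orderOf_left,
    ← pow_modEq_pow_iff_of_orderOf W.prime_right.one_lt W.orderOf_right]
  have hp := W.pow_mul_pow_modEq_pow_add
  have hq := W.pow_mul_pow_modEq_pow
  unfold Nat.ModEq at hp hq ⊢
  rw [hp, hp, hq, hq]

theorem injOn_pow_mul_pow (W : WhitemanData p q g h) (i : ℕ) :
    Set.InjOn (fun s => g ^ s * h ^ i % (p * q)) (range ((p - 1) * (q - 1) / 4)) := by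
  intro s hs t ht hst
  obtain ⟨hp, hq⟩ := W.pow_mul_pow_modEq_iff.mp hst
  rw [coe_range, Set.mem_Iio, ← W.lcm_eq] at hs ht
  exact (Nat.ModEq.add_right_cancel' i hp).eq_of_lt_lcm hq hs ht

theorem card_cyclotomicClass (W : WhitemanData p q g h) (i : ℕ) :
    #(cyclotomicClass p q g h i) = (p - 1) * (q - 1) / 4 := by
  rw [cyclotomicClass, card_image_of_injOn (W.injOn_pow_mul_pow i), card_range]

theorem disjoint_cyclotomicClass (W : WhitemanData p q g h) {i j : ℕ} (hi : i < 4) (hj : j < 4)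
    (hij : i ≠ j) : Disjoint (cyclotomicClass p q g h i) (cyclotomicClass p q g h j) := by
  rw [disjoint_left]
  intro u hu hu'
  obtain ⟨s, -, rfl⟩ := mem_image.mp hu
  obtain ⟨t, -, hts⟩ := mem_image.mp hu'
  obtain ⟨hp, hq⟩ := W.pow_mul_pow_modEq_iff.mp hts
  have h4 : j ≡ i [MOD 4] :=
    (hq.of_dvd W.four_dvd_right).add_left_cancel (hp.of_dvd W.four_dvd_left)
  exact hij (h4.eq_of_lt_of_lt hj hi).symm

theorem coprime_of_mem_cyclotomicClass (W : WhitemanData p q g h) {i u : ℕ}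
    (hu : u ∈ cyclotomicClass p q g h i) : (p * q).Coprime u := by
  obtain ⟨s, -, rfl⟩ := mem_image.mp hu
  have hmod : g ^ s * h ^ i % (p * q) ≡ g ^ s * h ^ i [MOD p * q] := Nat.mod_modEq _ _
  refine Nat.Coprime.mul_left (W.prime_left.coprime_iff_not_dvd.mpr ?_)
    (W.prime_right.coprime_iff_not_dvd.mpr ?_)
  · rw [((hmod.of_dvd (dvd_mul_right p q)).trans (W.pow_mul_pow_modEq_pow_add s i)).dvd_iff dvd_rfl]
    exact not_dvd_pow_of_orderOf W.prime_left.one_lt W.orderOf_left _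
  · rw [((hmod.of_dvd (dvd_mul_left q p)).trans (W.pow_mul_pow_modEq_pow s i)).dvd_iff dvd_rfl]
    exact not_dvd_pow_of_orderOf W.prime_right.one_lt W.orderOf_right _

theorem pairwiseDisjoint_cyclotomicClass (W : WhitemanData p q g h) :
    (range 4 : Set ℕ).PairwiseDisjoint (cyclotomicClass p q g h) :=
  fun _ hi _ hj hij => W.disjoint_cyclotomicClass (mem_range.mp hi) (mem_range.mp hj) hij

/-- Counting: four disjoint classes of `(p - 1)(q - 1)/4` elements fill the `φ(pq)` units. -/
theorem biUnion_cyclotomicClass (W : WhitemanData p q g h) :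
    (range 4).biUnion (cyclotomicClass p q g h) = (range (p * q)).filter (p * q).Coprime := by
  refine eq_of_subset_of_card_le (fun u hu => ?_) ?_
  · obtain ⟨i, -, hu⟩ := mem_biUnion.mp hu
    have hpq := Nat.mul_pos W.prime_left.pos W.prime_right.pos
    exact mem_filter.mpr ⟨mem_range.mpr ((mem_cyclotomicClass_iff hpq).mp hu).1,
      W.coprime_of_mem_cyclotomicClass hu⟩
  · rw [← Nat.totient_eq_card_coprime, Nat.totient_mul W.coprime,
      Nat.totient_prime W.prime_left, Nat.totient_prime W.prime_right,
      card_biUnion W.pairwiseDisjoint_cyclotomicClass,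
      sum_congr rfl fun i _ => W.card_cyclotomicClass i, sum_const, card_range, smul_eq_mul,
      Nat.mul_div_cancel' (dvd_mul_of_dvd_left W.four_dvd_left _)]

theorem sum_cyclotomicClass (W : WhitemanData p q g h) {M : Type*} [AddCommMonoid M]
    {f : ℕ → M} (hf : Periodic f q) (i : ℕ) :
    ∑ u ∈ cyclotomicClass p q g h i, f u = ((p - 1) / 4) • ∑ j ∈ Ico 1 q, f j := by
  have hmod : ∀ s, f (g ^ s * h ^ i % (p * q)) = f (g ^ s % q) := fun s => by
    rw [← hf.map_mod_nat, Nat.mod_mod_of_dvd _ (dvd_mul_left q p), W.pow_mul_pow_modEq_pow s i]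
  have hper : Periodic (fun s => f (g ^ s % q)) (q - 1) := fun s =>
    congrArg f ((pow_modEq_pow_iff_of_orderOf W.prime_right.one_lt W.orderOf_right).mpr
      Nat.add_modEq_right)
  rw [cyclotomicClass, sum_image (W.injOn_pow_mul_pow i), sum_congr rfl fun s _ => hmod s,
    ← Nat.div_mul_right_comm W.four_dvd_left, hper.sum_range_mul,
    sum_range_pow_mod W.prime_right.one_lt W.orderOf_right]

theorem sum_range_smul_of_periodic (W : WhitemanData p q g h) {e : ℕ → ℕ}
    (he2 : ∀ u < p * q, q ∣ u → e u = 2) (he0 : ∀ u < p * q, p ∣ u → ¬ q ∣ u → e u = 0)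
    (heD : ∀ i < 4, ∀ u ∈ cyclotomicClass p q g h i, e u = i)
    {M : Type*} [AddCommMonoid M] {f : ℕ → M} (hf : Periodic f q) :
    ∑ u ∈ range (p * q), e u • f u = (2 * p) • f 0 + (6 * ((p - 1) / 4)) • ∑ j ∈ Ico 1 q, f j := by
  have hmult : ∑ u ∈ (range (p * q)).filter (q ∣ ·), e u • f u = (2 * p) • f 0 := by
    have h2 : ∀ u ∈ (range (p * q)).filter (q ∣ ·), e u • f u = 2 • f u := fun u hu => by
      rw [mem_filter, mem_range] at hu
      rw [he2 u hu.1 hu.2]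
    rw [sum_congr rfl h2, ← smul_sum, hf.sum_filter_dvd_range_mul W.prime_right.pos, smul_smul]
  have hzero : ∑ u ∈ ((range (p * q)).filter (¬ q ∣ ·)).filter (p ∣ ·), e u • f u = 0 :=
    sum_eq_zero fun u hu => by
      simp only [mem_filter, mem_range] at hu
      rw [he0 u hu.1.1 hu.2 hu.1.2, zero_smul]
  have hunits : ∑ u ∈ ((range (p * q)).filter (¬ q ∣ ·)).filter (¬ p ∣ ·), e u • f u =
      (6 * ((p - 1) / 4)) • ∑ j ∈ Ico 1 q, f j := by
    rw [filter_filter, filter_congr fun u _ => by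
      rw [and_comm, ← W.prime_left.coprime_iff_not_dvd, ← W.prime_right.coprime_iff_not_dvd,
        ← Nat.coprime_mul_iff_left], ← W.biUnion_cyclotomicClass,
      sum_biUnion W.pairwiseDisjoint_cyclotomicClass]
    calc ∑ i ∈ range 4, ∑ u ∈ cyclotomicClass p q g h i, e u • f u
        = ∑ i ∈ range 4, i • ((p - 1) / 4) • ∑ j ∈ Ico 1 q, f j := sum_congr rfl fun i hi => by
          rw [sum_congr rfl fun u hu => by rw [heD i (mem_range.mp hi) u hu], ← smul_sum,
            W.sum_cyclotomicClass hf]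
      _ = _ := by rw [← sum_smul, smul_smul]; rfl
  rw [← sum_filter_add_sum_filter_not _ (q ∣ ·),
    ← sum_filter_add_sum_filter_not ((range (p * q)).filter (¬ q ∣ ·)) (p ∣ ·),
    hmult, hzero, hunits, zero_add]

theorem sum_mul_four_pow_modEq (W : WhitemanData p q g h) {e : ℕ → ℕ}
    (he2 : ∀ u < p * q, q ∣ u → e u = 2) (he0 : ∀ u < p * q, p ∣ u → ¬ q ∣ u → e u = 0)
    (heD : ∀ i < 4, ∀ u ∈ cyclotomicClass p q g h i, e u = i) :
    ∑ u ∈ range (p * q), e u * 4 ^ u ≡ (p + 3) / 2 [MOD 4 ^ q - 1] := by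
  have h4q : (4 : ZMod (4 ^ q - 1)) ^ q = 1 := by
    have h := ZMod.natCast_self (4 ^ q - 1)
    rw [Nat.cast_sub (Nat.one_le_pow _ _ (by norm_num)), sub_eq_zero] at h
    exact_mod_cast h
  have hf : Periodic (fun u => (4 : ZMod (4 ^ q - 1)) ^ u) q := fun u => by
    simp only [pow_add, h4q, mul_one]
  have hgeom : (∑ j ∈ Ico 1 q, (4 : ZMod (4 ^ q - 1)) ^ j) * 3 = -3 := by
    have h := geom_sum_Ico_mul (4 : ZMod (4 ^ q - 1)) W.prime_right.one_le
    rw [h4q] at h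
    linear_combination h
  obtain ⟨k, hk⟩ := W.four_dvd_left
  have hp := W.prime_left.one_le
  have hk' : (p - 1) / 4 = k := by omega
  have hp3 : (p + 3) / 2 = 2 * k + 2 := by omega
  have hpk : (p : ZMod (4 ^ q - 1)) = 4 * k + 1 := by
    rw [show p = 4 * k + 1 by omega]; push_cast; rfl
  rw [← ZMod.natCast_eq_natCast_iff]
  push_cast
  simp_rw [← nsmul_eq_mul]
  rw [W.sum_range_smul_of_periodic he2 he0 heD hf, hk', hp3]
  simp only [nsmul_eq_mul, pow_zero, mul_one]
  push_cast
  linear_combination 2 * hpk + (2 * k) * hgeom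

end WhitemanData

theorem E_four_mod_q_part_general (p q g h : ℕ) (hp : p.Prime) (hq : q.Prime)
    (hne : p ≠ q)
    (hgcd : Nat.gcd (p - 1) (q - 1) = 4)
    (hgp : orderOf (g : ZMod p) = p - 1)
    (hgq : orderOf (g : ZMod q) = q - 1)
    (hhp : h ≡ g [MOD p]) (hhq : h ≡ 1 [MOD q])
    (D : ℕ → Set (ZMod (p * q)))
    (hD : ∀ i, D i = {x : ZMod (p * q) | ∃ s < (p - 1) * (q - 1) / 4,
        x = (g : ZMod (p * q)) ^ s * (h : ZMod (p * q)) ^ i})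
    (e : ℕ → ℕ)
    (he2 : ∀ u < p * q, q ∣ u → e u = 2)
    (he0 : ∀ u < p * q, p ∣ u → ¬ q ∣ u → e u = 0)
    (heD : ∀ u < p * q, ∀ i < 4, (u : ZMod (p * q)) ∈ D i → e u = i) :
    (∑ u ∈ Finset.range (p * q), e u * 4 ^ u) ≡ (p + 3) / 2 [MOD 4 ^ q - 1] ∧
      Nat.gcd (∑ u ∈ Finset.range (p * q), e u * 4 ^ u) ((4 ^ q - 1) / 3) =
        Nat.gcd (4 ^ q - 1) (p + 3) := by
  have W : WhitemanData p q g h := ⟨hp, hq, hne, hgcd, hgp, hgq, hhp, hhq⟩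
  have hclass : ∀ i < 4, ∀ u ∈ cyclotomicClass p q g h i, e u = i := fun i hi u hu => by
    obtain ⟨hu, hDu⟩ := (mem_cyclotomicClass_iff (Nat.mul_pos hp.pos hq.pos)).mp hu
    exact heD u hu i hi (by rw [hD]; exact hDu)
  have hE := W.sum_mul_four_pow_modEq he2 he0 hclass
  refine ⟨hE, ?_⟩
  obtain ⟨k, hk⟩ := W.four_dvd_left
  have h3 : 3 ∣ 4 ^ q - 1 := by simpa using Nat.sub_dvd_pow_sub_pow 4 1 q
  have hodd : Odd (4 ^ q - 1) := Nat.Even.sub_odd (Nat.one_le_pow _ _ (by norm_num))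
    ((Nat.even_pow' hq.ne_zero).mpr (by decide)) odd_one
  have h3p : ¬ 3 ∣ (p + 3) / 2 := by
    intro h3c
    have h3p : 3 ∣ p := by omega
    have := hp.eq_one_or_self_of_dvd 3 h3p
    omega
  have h2 : 2 * ((p + 3) / 2) = p + 3 := by have := hp.one_le; omega
  rw [gcd_div_three_eq_of_modEq hE h3 hodd h3p, h2]

theorem E_four_mod_q_part (p q g h : ℕ) (hp : p.Prime) (hq : q.Prime)
    (hop : Odd p) (hoq : Odd q) (hne : p ≠ q)
    (hgcd : Nat.gcd (p - 1) (q - 1) = 4)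
    (hgp : orderOf (g : ZMod p) = p - 1)
    (hgq : orderOf (g : ZMod q) = q - 1)
    (hhp : h ≡ g [MOD p]) (hhq : h ≡ 1 [MOD q])
    (D : ℕ → Set (ZMod (p * q)))
    (hD : ∀ i, D i = {x : ZMod (p * q) | ∃ s < (p - 1) * (q - 1) / 4,
        x = (g : ZMod (p * q)) ^ s * (h : ZMod (p * q)) ^ i})
    (e : ℕ → ℕ)
    (he2 : ∀ u < p * q, q ∣ u → e u = 2)
    (he0 : ∀ u < p * q, p ∣ u → ¬ q ∣ u → e u = 0)
    (heD : ∀ u < p * q, ∀ i < 4, (u : ZMod (p * q)) ∈ D i → e u = i) :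
    (∑ u ∈ Finset.range (p * q), e u * 4 ^ u) ≡ (p + 3) / 2 [MOD 4 ^ q - 1] ∧
      Nat.gcd (∑ u ∈ Finset.range (p * q), e u * 4 ^ u) ((4 ^ q - 1) / 3) =
        Nat.gcd (4 ^ q - 1) (p + 3) :=
  E_four_mod_q_part_general p q g h hp hq hne hgcd hgp hgq hhp hhq D hD e he2 he0 heD
end

section
/- Let p < q be odd primes with gcd(p-1,q-1)=4, and set r1 = gcd(p+3, 4^q-1), r2 = gcd(q-1, 4^p-1) (divided by 3 if q ≡ 1 mod 3). Then r1 = 1 or r2 = 1. -/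
theorem r1_eq_one_or_r2_eq_one (p q : ℕ) (hp : p.Prime) (hq : q.Prime)
    (hop : Odd p) (hoq : Odd q) (hlt : p < q)
    (hgcd : Nat.gcd (p - 1) (q - 1) = 4)
    (r1 r2 : ℕ) (hr1 : r1 = Nat.gcd (p + 3) (4 ^ q - 1))
    (hr2 : r2 = if q ≡ 1 [MOD 3] then Nat.gcd (q - 1) (4 ^ p - 1) / 3
                else Nat.gcd (q - 1) (4 ^ p - 1)) :
    r1 = 1 ∨ r2 = 1 := by
  left
  subst hr1
  by_contra h
  obtain ⟨r, hrp, hrd⟩ := Nat.exists_prime_and_dvd h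
  have h1 : r ∣ p + 3 := hrd.trans (Nat.gcd_dvd_left _ _)
  have h2 : r ∣ 4 ^ q - 1 := hrd.trans (Nat.gcd_dvd_right _ _)
  have h4 : 4 ∣ p - 1 := hgcd ▸ Nat.gcd_dvd_left _ _
  have hp2 : 2 ≤ p := hp.two_le
  have hq2 : 2 ≤ q := hq.two_le
  have hpow1 : 1 ≤ 4 ^ q := Nat.one_le_pow _ _ (by norm_num)
  -- r is odd
  have hro : ¬ 2 ∣ r := by
    intro h2r
    have hodd : Odd (4 ^ q - 1) :=
      Nat.Even.sub_odd hpow1 (by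
        have : (4 : ℕ) ^ q = 2 * (2 * 4 ^ (q - 1)) := by
          rw [← mul_assoc]; norm_num
          rw [← pow_succ']
          congr 1; omega
        exact ⟨2 * 4 ^ (q - 1), by omega⟩) odd_one
    obtain ⟨m, hm⟩ := hodd
    have := h2r.trans h2
    omega
  haveI : Fact r.Prime := ⟨hrp⟩
  -- (4 : ZMod r) ^ q = 1
  have hcast : ((4 : ℕ) ^ q - 1 : ℕ) = ((4:ℕ) ^ q - 1 : ℤ) := by push_cast [hpow1]; ring
  have h41 : (4 : ZMod r) ^ q = 1 := by
    have h0 : (((4 : ℕ) ^ q - 1 : ℕ) : ZMod r) = 0 :=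
      (ZMod.natCast_eq_zero_iff _ _).mpr h2
    have : ((4 : ZMod r)) ^ q - 1 = 0 := by
      rw [Nat.cast_sub hpow1] at h0; push_cast at h0; exact h0
    linear_combination this
  have hord : orderOf (4 : ZMod r) ∣ q := orderOf_dvd_of_pow_eq_one h41
  rcases (Nat.Prime.eq_one_or_self_of_dvd hq _ hord) with h1' | hq'
  · -- order 1 : 4 = 1, r ∣ 3
    have : (4 : ZMod r) = 1 := orderOf_eq_one_iff.mp h1'
    have h3 : ((3 : ℕ) : ZMod r) = 0 := by push_cast; linear_combination this
    have hr3 : r ∣ 3 := (ZMod.natCast_eq_zero_iff _ _).mp h3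
    have : r = 3 := (Nat.prime_dvd_prime_iff_eq hrp (by norm_num)).mp hr3
    subst this
    have h3p : (3 : ℕ) ∣ p := (Nat.dvd_add_right ⟨1, rfl⟩).mp (by rwa [Nat.add_comm] at h1)
    have : p = 3 := ((Nat.prime_dvd_prime_iff_eq (by norm_num) hp).mp h3p).symm
    omega
  · -- order q : q ∣ r - 1
    have h4ne : (4 : ZMod r) ≠ 0 := by
      intro hz
      rw [hz, zero_pow (by omega)] at h41
      exact one_ne_zero h41.symm
    have hdvd : q ∣ r - 1 := hq' ▸ ZMod.orderOf_dvd_card_sub_one h4ne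
    have hr2' : 2 ≤ r := hrp.two_le
    have hrge : q + 1 ≤ r := by
      have := Nat.le_of_dvd (by omega) hdvd
      omega
    -- r divides p+3 and r > (p+3)/2, so r = p+3
    obtain ⟨k, hk⟩ := h1
    have hk1 : k = 1 := by
      rcases k with _ | _ | k
      · omega
      · rfl
      · exfalso
        have h2r : r * 2 ≤ p + 3 := by
          rw [hk]; exact Nat.mul_le_mul_left r (by omega)
        omega
    subst hk1
    -- r = p + 3 is even since p is odd
    obtain ⟨m, hm⟩ := hop
    apply hro
    omega
end
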